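/- Let R be a local ring. Then the ring T_2(R) of 2×2 upper triangular matrices over R is very clean if and only if the ring T_2(R[[x]]) of 2×2 upper triangular matrices over the power series ring R[[x]] is very clean. -/

import Mathlib

/-- An element `a` of a ring is *very clean* if there is an idempotent `e` commuting with `a`
such that `a - e` or `a + e` is a unit. -/
def IsVeryClean {R : Type*} [Ring R] (a : R) : Prop :=
  ∃ e : R, IsIdempotentElem e ∧ a * e = e * a ∧ (IsUnit (a - e) ∨ IsUnit (a + e))

/-- A ring is *very clean* if every element is very clean. -/
def VeryCleanRing (R : Type*) [Ring R] : Prop :=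
  ∀ a : R, IsVeryClean a

/-- An element `a` of a ring is *strongly clean* if there is an idempotent `e` commuting with `a`
such that `a - e` is a unit. -/
def IsStronglyClean {R : Type*} [Ring R] (a : R) : Prop :=
  ∃ e : R, IsIdempotentElem e ∧ a * e = e * a ∧ IsUnit (a - e)

/-- A ring is *strongly clean* if every element is strongly clean. -/
def StronglyCleanRing (R : Type*) [Ring R] : Prop :=
  ∀ a : R, IsStronglyClean a

/-- The ring `T₂(R)` of 2×2 upper triangular matrices over `R`,
as a subring of the full 2×2 matrix ring. -/
def T2 (R : Type*) [Ring R] : Subring (Matrix (Fin 2) (Fin 2) R) where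
  carrier := {A | A 1 0 = 0}
  zero_mem' := rfl
  one_mem' := Matrix.one_apply_ne (by decide)
  add_mem' := by
    intro A B hA hB
    simp only [Set.mem_setOf_eq] at *
    simp [Matrix.add_apply, hA, hB]
  neg_mem' := by
    intro A hA
    simp only [Set.mem_setOf_eq] at *
    simp [Matrix.neg_apply, hA]
  mul_mem' := by
    intro A B hA hB
    simp only [Set.mem_setOf_eq] at *
    simp [Matrix.mul_apply, Fin.sum_univ_two, hA, hB]

theorem mem_T2_iff {R : Type*} [Ring R] {A : Matrix (Fin 2) (Fin 2) R} :
    A ∈ T2 R ↔ A 1 0 = 0 := Iff.rfl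

/-!
Over a local ring the only idempotents are `0` and `1`, so an idempotent of `T₂(S)` is `0`, `1`,
`!![1, c; 0, 0]` or `!![0, c; 0, 1]`. Hence `!![a, b; 0, d]` is very clean unless `(a, d)` or
`(d, a)` is an exceptional pair (`IsExceptionalPair`), and in that case it is very clean iff
`a * c - c * d = ± b` has a solution `c`: `T₂(S)` is very clean iff `c ↦ a * c - c * d` is
surjective for every exceptional pair. Over `R⟦X⟧`, being an exceptional pair depends only on
constant coefficients, and so does this surjectivity: the `n`-th coefficient of `a * c - c * d` is
`a₀ * cₙ - cₙ * d₀` plus terms in `c₀, …, cₙ₋₁`, so the equation can be solved coefficient by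
coefficient.
-/

namespace IsLocalRing

variable {S : Type*} [Ring S] [IsLocalRing S]

theorem isUnit_sub_one_of_not_isUnit {x : S} (hx : ¬IsUnit x) : IsUnit (x - 1) := by
  simpa using ((isUnit_or_isUnit_of_add_one (add_sub_cancel x 1)).resolve_left hx).neg

theorem isUnit_add_one_of_not_isUnit {x : S} (hx : ¬IsUnit x) : IsUnit (x + 1) :=
  (isUnit_or_isUnit_of_add_one (add_neg_cancel_comm x 1)).resolve_right
    fun h => hx (by simpa using h.neg)

theorem isIdempotentElem_iff {e : S} : IsIdempotentElem e ↔ e = 0 ∨ e = 1 := by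
  refine ⟨fun he => ?_, by rintro (rfl | rfl) <;> simp [IsIdempotentElem]⟩
  rcases isUnit_or_isUnit_of_add_one (add_sub_cancel e 1) with h | h
  · exact .inr (h.mul_left_cancel (by rw [he.eq, mul_one]))
  · exact .inl (h.mul_left_cancel (by rw [he.one_sub_mul_self, mul_zero]))

end IsLocalRing

/-- Over a local ring, `!![a, b; 0, d]` with `IsExceptionalPair a d` can only be very clean through
an idempotent `!![1, c; 0, 0]`, and with `IsExceptionalPair d a` only through `!![0, c; 0, 1]`. -/
def IsExceptionalPair {S : Type*} [Ring S] (a d : S) : Prop :=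
  ¬IsUnit a ∧ ¬IsUnit (d - 1) ∧ ¬IsUnit (d + 1)

theorem isExceptionalPair_map_iff {S T F : Type*} [Ring S] [Ring T] [FunLike F S T]
    [RingHomClass F S T] (f : F) [IsLocalHom f] {a d : S} :
    IsExceptionalPair (f a) (f d) ↔ IsExceptionalPair a d := by
  simp only [IsExceptionalPair, ← map_one f, ← map_sub, ← map_add, isUnit_map_iff]

namespace T2

variable {S : Type*} [Ring S] {a b c d a' b' d' : S}

def mk (a b d : S) : T2 S := ⟨!![a, b; 0, d], rfl⟩

theorem eq_mk (A : T2 S) : A = mk (A.1 0 0) (A.1 0 1) (A.1 1 1) := by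
  ext i j
  fin_cases i <;> fin_cases j <;> simp [mk, show A.1 1 0 = 0 from A.2]

theorem mk_inj : mk a b d = mk a' b' d' ↔ a = a' ∧ b = b' ∧ d = d' := by
  refine ⟨fun h => ?_, by rintro ⟨rfl, rfl, rfl⟩; rfl⟩
  have h' := congrArg Subtype.val h
  exact ⟨congrFun₂ h' 0 0, congrFun₂ h' 0 1, congrFun₂ h' 1 1⟩

theorem zero_eq_mk : (0 : T2 S) = mk 0 0 0 := by
  ext i j; fin_cases i <;> fin_cases j <;> rfl

theorem one_eq_mk : (1 : T2 S) = mk 1 0 1 := by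
  ext i j; fin_cases i <;> fin_cases j <;> rfl

theorem mk_add : mk a b d + mk a' b' d' = mk (a + a') (b + b') (d + d') := by
  ext i j; fin_cases i <;> fin_cases j <;> simp [mk]

theorem mk_sub : mk a b d - mk a' b' d' = mk (a - a') (b - b') (d - d') := by
  ext i j; fin_cases i <;> fin_cases j <;> simp [mk]

theorem mk_mul : mk a b d * mk a' b' d' = mk (a * a') (a * b' + b * d') (d * d') := by
  ext i j; fin_cases i <;> fin_cases j <;> simp [mk, Matrix.mul_apply]

theorem isUnit_mk_iff : IsUnit (mk a b d) ↔ IsUnit a ∧ IsUnit d := by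
  simp only [isUnit_iff_exists]
  constructor
  · rintro ⟨B, hAB, hBA⟩
    rw [eq_mk B] at hAB hBA
    simp only [mk_mul, one_eq_mk, mk_inj] at hAB hBA
    exact ⟨⟨_, hAB.1, hBA.1⟩, ⟨_, hAB.2.2, hBA.2.2⟩⟩
  · rintro ⟨⟨a', haa', ha'a⟩, ⟨d', hdd', hd'd⟩⟩
    refine ⟨mk a' (-(a' * b * d')) d', ?_, ?_⟩ <;> rw [mk_mul, one_eq_mk, mk_inj]
    · refine ⟨haa', ?_, hdd'⟩
      simp [← mul_assoc, haa']
    · refine ⟨ha'a, ?_, hd'd⟩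
      simp [mul_assoc, hd'd]

theorem isIdempotentElem_mk_one_zero (c : S) : IsIdempotentElem (mk 1 c 0) := by
  simp [IsIdempotentElem, mk_mul]

theorem isIdempotentElem_mk_zero_one (c : S) : IsIdempotentElem (mk 0 c 1) := by
  simp [IsIdempotentElem, mk_mul]

theorem commute_mk_one_zero_iff : Commute (mk a b d) (mk 1 c 0) ↔ a * c - c * d = b := by
  simp [Commute, SemiconjBy, mk_mul, mk_inj, sub_eq_iff_eq_add]

theorem commute_mk_zero_one_iff : Commute (mk a b d) (mk 0 c 1) ↔ a * c - c * d = -b := by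
  simp [Commute, SemiconjBy, mk_mul, mk_inj, sub_eq_iff_eq_add, neg_add_eq_sub,
    eq_sub_iff_add_eq]

theorem isVeryClean_mk_of_isUnit (ha : IsUnit a) (hd : IsUnit d) : IsVeryClean (mk a b d) :=
  ⟨0, .zero, (Commute.zero_right _).eq, .inl (by rwa [sub_zero, isUnit_mk_iff, and_iff_right ha])⟩

theorem isVeryClean_mk_of_isUnit_sub_one (ha : IsUnit (a - 1)) (hd : IsUnit (d - 1)) :
    IsVeryClean (mk a b d) :=
  ⟨1, .one, (Commute.one_right _).eq,
    .inl (by rw [one_eq_mk, mk_sub, isUnit_mk_iff]; exact ⟨ha, hd⟩)⟩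

theorem isVeryClean_mk_of_isUnit_add_one (ha : IsUnit (a + 1)) (hd : IsUnit (d + 1)) :
    IsVeryClean (mk a b d) :=
  ⟨1, .one, (Commute.one_right _).eq,
    .inr (by rw [one_eq_mk, mk_add, isUnit_mk_iff]; exact ⟨ha, hd⟩)⟩

theorem isVeryClean_mk_of_mul_sub_mul_eq (hc : a * c - c * d = b) (ha : IsUnit (a - 1))
    (hd : IsUnit d) : IsVeryClean (mk a b d) :=
  ⟨mk 1 c 0, isIdempotentElem_mk_one_zero c, commute_mk_one_zero_iff.2 hc,
    .inl (by rw [mk_sub, isUnit_mk_iff, sub_zero]; exact ⟨ha, hd⟩)⟩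

theorem isVeryClean_mk_of_mul_sub_mul_eq_neg (hc : a * c - c * d = -b) (ha : IsUnit a)
    (hd : IsUnit (d - 1)) : IsVeryClean (mk a b d) :=
  ⟨mk 0 c 1, isIdempotentElem_mk_zero_one c, commute_mk_zero_one_iff.2 hc,
    .inl (by rw [mk_sub, isUnit_mk_iff, sub_zero]; exact ⟨ha, hd⟩)⟩

variable [IsLocalRing S]

theorem isIdempotentElem_iff {E : T2 S} :
    IsIdempotentElem E ↔ E = 0 ∨ E = 1 ∨ (∃ c, E = mk 1 c 0) ∨ ∃ c, E = mk 0 c 1 := by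
  refine ⟨fun hE => ?_, ?_⟩
  · obtain ⟨e, c, f, rfl⟩ : ∃ e c f, E = mk e c f := ⟨_, _, _, eq_mk E⟩
    rw [IsIdempotentElem, mk_mul, mk_inj] at hE
    obtain ⟨he, hc, hf⟩ := hE
    rcases IsLocalRing.isIdempotentElem_iff.1 he with rfl | rfl <;>
      rcases IsLocalRing.isIdempotentElem_iff.1 hf with rfl | rfl
    · simp only [zero_mul, mul_zero, add_zero] at hc
      simp [zero_eq_mk, ← hc]
    · exact .inr (.inr (.inr ⟨c, rfl⟩))
    · exact .inr (.inr (.inl ⟨c, rfl⟩))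
    · simp only [one_mul, mul_one, add_eq_right] at hc
      simp [one_eq_mk, hc]
  · rintro (rfl | rfl | ⟨c, rfl⟩ | ⟨c, rfl⟩)
    exacts [.zero, .one, isIdempotentElem_mk_one_zero c, isIdempotentElem_mk_zero_one c]

open IsLocalRing in
theorem isVeryClean_mk_iff : IsVeryClean (mk a b d) ↔
    (IsExceptionalPair a d → ∃ c, a * c - c * d = b) ∧
      (IsExceptionalPair d a → ∃ c, a * c - c * d = -b) := by
  constructor
  · rintro ⟨E, hE, hcomm, hunit⟩
    rcases isIdempotentElem_iff.1 hE with rfl | rfl | ⟨c, rfl⟩ | ⟨c, rfl⟩ <;>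
      simp only [zero_eq_mk, one_eq_mk, mk_sub, mk_add, isUnit_mk_iff, sub_zero, add_zero] at hunit
    · have ⟨ha, hd⟩ := hunit.elim id id
      exact ⟨fun h => absurd ha h.1, fun h => absurd hd h.1⟩
    · refine ⟨fun h => ?_, fun h => ?_⟩ <;> rcases hunit with ⟨ha, hd⟩ | ⟨ha, hd⟩
      exacts [absurd hd h.2.1, absurd hd h.2.2, absurd ha h.2.1, absurd ha h.2.2]
    · have hd : IsUnit d := hunit.elim And.right And.right
      exact ⟨fun _ => ⟨c, commute_mk_one_zero_iff.1 hcomm⟩, fun h => absurd hd h.1⟩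
    · have ha : IsUnit a := hunit.elim And.left And.left
      exact ⟨fun h => absurd ha h.1, fun _ => ⟨c, commute_mk_zero_one_iff.1 hcomm⟩⟩
  · rintro ⟨h₁, h₂⟩
    by_cases ha : IsUnit a <;> by_cases hd : IsUnit d
    · exact isVeryClean_mk_of_isUnit ha hd
    · by_cases ha₁ : IsUnit (a - 1)
      · exact isVeryClean_mk_of_isUnit_sub_one ha₁ (isUnit_sub_one_of_not_isUnit hd)
      by_cases ha₂ : IsUnit (a + 1)
      · exact isVeryClean_mk_of_isUnit_add_one ha₂ (isUnit_add_one_of_not_isUnit hd)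
      obtain ⟨c, hc⟩ := h₂ ⟨hd, ha₁, ha₂⟩
      exact isVeryClean_mk_of_mul_sub_mul_eq_neg hc ha (isUnit_sub_one_of_not_isUnit hd)
    · by_cases hd₁ : IsUnit (d - 1)
      · exact isVeryClean_mk_of_isUnit_sub_one (isUnit_sub_one_of_not_isUnit ha) hd₁
      by_cases hd₂ : IsUnit (d + 1)
      · exact isVeryClean_mk_of_isUnit_add_one (isUnit_add_one_of_not_isUnit ha) hd₂
      obtain ⟨c, hc⟩ := h₁ ⟨ha, hd₁, hd₂⟩
      exact isVeryClean_mk_of_mul_sub_mul_eq hc (isUnit_sub_one_of_not_isUnit ha) hd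
    · exact isVeryClean_mk_of_isUnit_sub_one (isUnit_sub_one_of_not_isUnit ha)
        (isUnit_sub_one_of_not_isUnit hd)

theorem veryCleanRing_iff : VeryCleanRing (T2 S) ↔ ∀ a d : S,
    IsExceptionalPair a d ∨ IsExceptionalPair d a →
      Function.Surjective (AddMonoidHom.mulLeft a - AddMonoidHom.mulRight d) := by
  refine ⟨fun h a d hpair b => ?_, fun h A => ?_⟩
  · rcases hpair with hpair | hpair
    · exact (isVeryClean_mk_iff.1 (h (mk a b d))).1 hpair
    · obtain ⟨c, hc⟩ := (isVeryClean_mk_iff.1 (h (mk a (-b) d))).2 hpair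
      exact ⟨c, by simpa using hc⟩
  · rw [eq_mk A]
    exact isVeryClean_mk_iff.2
      ⟨fun hpair => h _ _ (.inl hpair) _, fun hpair => h _ _ (.inr hpair) _⟩

end T2

theorem Function.Surjective.surjective_mulLeft_sub_mulRight_map {S T F : Type*} [Ring S] [Ring T]
    [FunLike F S T] [RingHomClass F S T] {f : F} (hf : Function.Surjective f) {a d : S}
    (h : Function.Surjective (AddMonoidHom.mulLeft a - AddMonoidHom.mulRight d)) :
    Function.Surjective (AddMonoidHom.mulLeft (f a) - AddMonoidHom.mulRight (f d)) := by
  intro y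
  obtain ⟨x, rfl⟩ := hf y
  obtain ⟨c, rfl⟩ := h x
  exact ⟨f c, by simp⟩

namespace PowerSeries

variable {R : Type*} [Ring R]

instance [IsLocalRing R] : IsLocalRing R⟦X⟧ :=
  IsLocalRing.of_isUnit_or_isUnit_one_sub_self fun φ => by
    simpa only [isUnit_iff_constantCoeff, map_sub, map_one] using
      IsLocalRing.isUnit_or_isUnit_of_add_one (add_sub_cancel (constantCoeff φ) 1)

instance : IsLocalHom (constantCoeff : R⟦X⟧ →+* R) :=
  ⟨fun _ => isUnit_iff_constantCoeff.2⟩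

theorem coeff_mul_sub_mul (a c d : R⟦X⟧) (n : ℕ) :
    coeff n (a * c - c * d) = ∑ i ∈ Finset.range (n + 1),
      (coeff (n - i) a * coeff i c - coeff i c * coeff (n - i) d) := by
  rw [map_sub, coeff_mul, coeff_mul, ← Finset.Nat.sum_antidiagonal_swap]
  simp only [Prod.fst_swap, Prod.snd_swap]
  rw [Finset.Nat.sum_antidiagonal_eq_sum_range_succ (fun i j => coeff j a * coeff i c),
    Finset.Nat.sum_antidiagonal_eq_sum_range_succ (fun i j => coeff i c * coeff j d),
    Finset.sum_sub_distrib]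

/-- Coefficients of a solution of `a * c - c * d = b`, when `s` is a right inverse of
`x ↦ a₀ * x - x * d₀`. -/
noncomputable def sylvesterSolutionCoeff (s : R → R) (a d b : R⟦X⟧) : ℕ → R
  | n => s (coeff n b - ∑ i : Fin n,
      (coeff (n - i) a * sylvesterSolutionCoeff s a d b i -
        sylvesterSolutionCoeff s a d b i * coeff (n - i) d))

theorem surjective_mulLeft_sub_mulRight_of_constantCoeff {a d : R⟦X⟧}
    (h : Function.Surjective
      (AddMonoidHom.mulLeft (constantCoeff a) - AddMonoidHom.mulRight (constantCoeff d))) :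
    Function.Surjective (AddMonoidHom.mulLeft a - AddMonoidHom.mulRight d) := by
  intro b
  set c := sylvesterSolutionCoeff (Function.surjInv h) a d b
  have hc (n : ℕ) : constantCoeff a * c n - c n * constantCoeff d =
      coeff n b - ∑ i : Fin n, (coeff (n - i) a * c i - c i * coeff (n - i) d) := by
    rw [show c n = _ by unfold c; rw [sylvesterSolutionCoeff]]
    exact Function.surjInv_eq h _
  refine ⟨mk c, ext fun n => ?_⟩
  change coeff n (a * mk c - mk c * d) = coeff n b
  rw [coeff_mul_sub_mul, Finset.sum_range_succ, Nat.sub_self, coeff_zero_eq_constantCoeff_apply,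
    coeff_zero_eq_constantCoeff_apply]
  simp only [coeff_mk, hc, ← Fin.sum_univ_eq_sum_range]
  abel

theorem surjective_mulLeft_sub_mulRight_iff {a d : R⟦X⟧} :
    Function.Surjective (AddMonoidHom.mulLeft a - AddMonoidHom.mulRight d) ↔ Function.Surjective
      (AddMonoidHom.mulLeft (constantCoeff a) - AddMonoidHom.mulRight (constantCoeff d)) :=
  ⟨constantCoeff_surj.surjective_mulLeft_sub_mulRight_map,
    surjective_mulLeft_sub_mulRight_of_constantCoeff⟩

end PowerSeries

theorem T2_very_clean_iff_T2_powerSeries_very_clean (R : Type*) [Ring R] [IsLocalRing R] :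
    VeryCleanRing (T2 R) ↔ VeryCleanRing (T2 (PowerSeries R)) := by
  rw [T2.veryCleanRing_iff, T2.veryCleanRing_iff]
  constructor
  · intro h a d hpair
    rw [PowerSeries.surjective_mulLeft_sub_mulRight_iff]
    exact h _ _ (by simpa only [isExceptionalPair_map_iff PowerSeries.constantCoeff] using hpair)
  · intro h a d hpair
    have hC := PowerSeries.surjective_mulLeft_sub_mulRight_iff.1 <|
      h (PowerSeries.C a) (PowerSeries.C d) (by
        simpa only [← isExceptionalPair_map_iff PowerSeries.constantCoeff,
          PowerSeries.constantCoeff_C])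
    simpa only [PowerSeries.constantCoeff_C] using hC
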